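/- Let S be a finite set, let f : 2^S → ℝ be a normalized monotone submodular function, and let g : 2^S → ℝ be any set function such that { x ∈ ℝ^S : x ≥ 0 componentwise and x(B) ≤ g(B) for all B ⊆ S } = P_f. Then g(A) ≥ f(A) for every A ⊆ S. -/

import Mathlib

/-!
Every `A` is tight for some point of `P_f`: adding the elements of `A` one at a time and giving
each the marginal gain of `f` yields `x ∈ P_f` with `x(A) = f(A)` (the greedy vertex). Since
`P_g = P_f`, that point also satisfies `x(A) ≤ g(A)`.
-/

open Finset

def polymatroid {ι : Type*} (f : Finset ι → ℝ) : Set (ι → ℝ) :=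
  {x | (∀ i, 0 ≤ x i) ∧ ∀ B : Finset ι, ∑ i ∈ B, x i ≤ f B}

section Greedy

variable {ι : Type*} [DecidableEq ι] {f : Finset ι → ℝ}
  (hnorm : f ∅ = 0)
  (hmono : ∀ A B : Finset ι, A ⊆ B → f A ≤ f B)
  (hsub : ∀ A B : Finset ι, A ⊆ B → ∀ v ∉ B, f (insert v A) - f A ≥ f (insert v B) - f B)
include hnorm hmono hsub

/-- The bound `x(B) ≤ f(B ∩ A)` is the invariant that lets the marginal gain of a new element be
compared, by submodularity, with its gain over `B ∩ A`. -/
theorem exists_greedy_vector (A : Finset ι) :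
    ∃ x : ι → ℝ, (∀ i, 0 ≤ x i) ∧ (∀ B, ∑ i ∈ B, x i ≤ f (B ∩ A)) ∧ ∑ i ∈ A, x i = f A := by
  induction A using Finset.induction_on with
  | empty => exact ⟨0, fun _ => le_rfl, fun B => by simp [hnorm], by simp [hnorm]⟩
  | insert a s has ih =>
    obtain ⟨x, hx0, hxB, hxs⟩ := ih
    set gain := f (insert a s) - f s
    have hgain : 0 ≤ gain := sub_nonneg.2 (hmono _ _ (subset_insert a s))
    refine ⟨Function.update x a gain, fun i => ?_, fun B => ?_, ?_⟩
    · rcases eq_or_ne i a with rfl | hia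
      · simpa using hgain
      · simpa [hia] using hx0 i
    · by_cases haB : a ∈ B
      · have hrest : (B \ {a}) ∩ s = B ∩ s := by
          ext i; by_cases hi : i = a <;> simp_all
        calc ∑ i ∈ B, Function.update x a gain i
            = gain + ∑ i ∈ B \ {a}, x i := sum_update_of_mem haB x gain
          _ ≤ gain + f (B ∩ s) := by linarith [hrest ▸ hxB (B \ {a})]
          _ ≤ f (insert a (B ∩ s)) := by
            linarith [hsub (B ∩ s) s inter_subset_right a has]
          _ = f (B ∩ insert a s) := by rw [inter_insert_of_mem haB]
      · rw [sum_update_of_notMem haB, inter_insert_of_notMem haB]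
        exact hxB B
    · rw [sum_insert has, Function.update_self, sum_update_of_notMem has, hxs]
      ring

theorem exists_mem_polymatroid_sum_eq (A : Finset ι) :
    ∃ x ∈ polymatroid f, ∑ i ∈ A, x i = f A := by
  obtain ⟨x, hx0, hxB, hxA⟩ := exists_greedy_vector hnorm hmono hsub A
  exact ⟨x, ⟨hx0, fun B => (hxB B).trans (hmono _ _ inter_subset_left)⟩, hxA⟩

end Greedy

theorem ge_of_polymatroid_eq_general {ι : Type*} [DecidableEq ι]
    (f g : Finset ι → ℝ)
    (hnorm : f ∅ = 0)
    (hmono : ∀ A B : Finset ι, A ⊆ B → f A ≤ f B)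
    (hsub : ∀ A B : Finset ι, A ⊆ B → ∀ v ∉ B,
      f (insert v A) - f A ≥ f (insert v B) - f B)
    (hpoly : {x : ι → ℝ | (∀ i, 0 ≤ x i) ∧ ∀ B : Finset ι, ∑ i ∈ B, x i ≤ g B}
      = {x : ι → ℝ | (∀ i, 0 ≤ x i) ∧ ∀ B : Finset ι, ∑ i ∈ B, x i ≤ f B}) :
    ∀ A : Finset ι, g A ≥ f A := by
  change polymatroid g = polymatroid f at hpoly
  intro A
  obtain ⟨x, hxf, hxA⟩ := exists_mem_polymatroid_sum_eq hnorm hmono hsub A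
  have hxg : x ∈ polymatroid g := hpoly ▸ hxf
  exact hxA ▸ hxg.2 A

/-- For a finite ground set `S` (modelled as a finite type `ι`), a normalized
monotone submodular function `f`, and any set function `g` whose polymatroid
equals `P_f`, we have `g A ≥ f A` for every `A ⊆ S`. -/
theorem ge_of_polymatroid_eq {ι : Type*} [Fintype ι] [DecidableEq ι]
    (f g : Finset ι → ℝ)
    (hnorm : f ∅ = 0)
    (hmono : ∀ A B : Finset ι, A ⊆ B → f A ≤ f B)
    (hsub : ∀ A B : Finset ι, A ⊆ B → ∀ v ∉ B,
      f (insert v A) - f A ≥ f (insert v B) - f B)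
    (hpoly : {x : ι → ℝ | (∀ i, 0 ≤ x i) ∧ ∀ B : Finset ι, ∑ i ∈ B, x i ≤ g B}
      = {x : ι → ℝ | (∀ i, 0 ≤ x i) ∧ ∀ B : Finset ι, ∑ i ∈ B, x i ≤ f B}) :
    ∀ A : Finset ι, g A ≥ f A :=
  ge_of_polymatroid_eq_general f g hnorm hmono hsub hpoly
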